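/- arXiv:1004.0552 — 3 statements merged into one kernel-verified Lean document; each statement's English description precedes it below -/
import Mathlib

section
/- Let X be a random variable with E[X]=0, E[X^2]=1, E[|X|^3]=ρ<∞, and let Y = X·1_{|X|≤h} for h>0. Then for any s ≥ 0, E[exp(sY)] ≤ 1 + s²/2 + (ρ/h³)(exp(sh) − 1). -/
open MeasureTheory ProbabilityTheory Real

/-!
Everything rests on one pointwise bound in terms of `x` itself: for `s ≥ 0`,
`exp (s y) ≤ 1 + s x + s² x² / 2 + (exp (s h) - 1) |x|³ / h³` where `y` is `x` truncated at `h`.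
For `|x| ≤ h` this follows by comparing the Taylor tails `∑ₙ₌₃ (s x)ⁿ / n!` termwise with those
of `exp (s h)`. For `|x| > h` the left side is `1`, and the cubic term dominates `s |x|`
since `exp (s h) - 1 ≥ s h`. Integrating with `E X = 0`, `E X² = 1`, `E |X|³ = ρ` gives the claim.
-/

namespace Real

lemma exp_sub_quadratic_eq_tsum (x : ℝ) :
    exp x - (1 + x + x ^ 2 / 2) = ∑' n : ℕ, x ^ (n + 3) / (n + 3).factorial := by
  have htail : Summable fun n : ℕ => x ^ (n + 3) / (n + 3).factorial :=
    (summable_nat_add_iff 3).2 (summable_pow_div_factorial x)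
  rw [exp_eq_exp_ℝ, NormedSpace.exp_eq_tsum_div]
  beta_reduce
  rw [← htail.sum_add_tsum_nat_add' (f := fun n => x ^ n / n.factorial)]
  norm_num [Finset.sum_range_succ]

lemma exp_le_quadratic_of_nonpos {x : ℝ} (hx : x ≤ 0) : exp x ≤ 1 + x + x ^ 2 / 2 := by
  have hneg : 1 + -x + (-x) ^ 2 / 2 ≤ exp (-x) := quadratic_le_exp_of_nonneg (by linarith)
  have hprod : exp x * exp (-x) = 1 := by rw [← exp_add, add_neg_cancel, exp_zero]
  -- `(1 + x + x²/2)(1 - x + x²/2) = 1 + x⁴/4 ≥ 1 = exp x * exp (-x)`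
  nlinarith [exp_pos x, exp_pos (-x), sq_nonneg (x ^ 2)]

lemma pow_three_mul_exp_sub_quadratic_le {s x h : ℝ} (hs : 0 ≤ s) (hx : 0 ≤ x) (hxh : x ≤ h) :
    h ^ 3 * (exp (s * x) - (1 + s * x + (s * x) ^ 2 / 2))
      ≤ x ^ 3 * (exp (s * h) - (1 + s * h + (s * h) ^ 2 / 2)) := by
  simp only [exp_sub_quadratic_eq_tsum, ← tsum_mul_left]
  refine Summable.tsum_le_tsum (fun n => ?_) ?_ ?_
  · have hxn : h ^ 3 * x ^ n ≤ h ^ 3 * h ^ n :=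
      mul_le_mul_of_nonneg_left (pow_le_pow_left₀ hx hxh n) (pow_nonneg (hx.trans hxh) 3)
    calc h ^ 3 * ((s * x) ^ (n + 3) / (n + 3).factorial)
        = s ^ (n + 3) * x ^ 3 * (h ^ 3 * x ^ n) / (n + 3).factorial := by ring
      _ ≤ s ^ (n + 3) * x ^ 3 * (h ^ 3 * h ^ n) / (n + 3).factorial := by gcongr
      _ = x ^ 3 * ((s * h) ^ (n + 3) / (n + 3).factorial) := by ring
  · exact ((summable_nat_add_iff 3).2 (summable_pow_div_factorial _)).mul_left _
  · exact ((summable_nat_add_iff 3).2 (summable_pow_div_factorial _)).mul_left _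

lemma exp_mul_le_of_abs_le {s x h : ℝ} (hh : 0 < h) (hs : 0 ≤ s) (hxh : |x| ≤ h) :
    exp (s * x) ≤ 1 + s * x + s ^ 2 / 2 * x ^ 2 + (exp (s * h) - 1) / h ^ 3 * |x| ^ 3 := by
  have hexp : 0 ≤ exp (s * h) - 1 := by
    simpa using one_le_exp (mul_nonneg hs hh.le)
  rcases le_total x 0 with hx | hx
  · have hcubic : 0 ≤ (exp (s * h) - 1) / h ^ 3 * |x| ^ 3 := by positivity
    have := exp_le_quadratic_of_nonpos (mul_nonpos_of_nonneg_of_nonpos hs hx)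
    linarith
  · have hrem := pow_three_mul_exp_sub_quadratic_le hs hx (abs_of_nonneg hx ▸ hxh)
    have hquad : 0 ≤ s * h + (s * h) ^ 2 / 2 := by positivity
    have hcubic :
        exp (s * x) - (1 + s * x + (s * x) ^ 2 / 2) ≤ (exp (s * h) - 1) / h ^ 3 * x ^ 3 := by
      rw [div_mul_eq_mul_div, le_div_iff₀ (by positivity)]
      nlinarith [pow_nonneg hx 3]
    rw [abs_of_nonneg hx]
    linarith

lemma exp_mul_truncation_le {s h : ℝ} (hh : 0 < h) (hs : 0 ≤ s) (x : ℝ) :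
    exp (s * if |x| ≤ h then x else 0)
      ≤ 1 + s * x + s ^ 2 / 2 * x ^ 2 + (exp (s * h) - 1) / h ^ 3 * |x| ^ 3 := by
  split_ifs with hxh
  · exact exp_mul_le_of_abs_le hh hs hxh
  have hlin : s * h ≤ exp (s * h) - 1 := by linarith [add_one_le_exp (s * h)]
  have hpow : h ^ 2 * |x| ≤ |x| ^ 3 := by
    have : h ^ 2 ≤ |x| ^ 2 := pow_le_pow_left₀ hh.le (not_le.1 hxh).le 2
    nlinarith [abs_nonneg x]
  have hcubic : s * |x| ≤ (exp (s * h) - 1) / h ^ 3 * |x| ^ 3 := by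
    rw [div_mul_eq_mul_div, le_div_iff₀ (by positivity)]
    calc s * |x| * h ^ 3 = s * h * (h ^ 2 * |x|) := by ring
      _ ≤ (exp (s * h) - 1) * |x| ^ 3 :=
        mul_le_mul hlin hpow (by positivity) ((mul_nonneg hs hh.le).trans hlin)
  rw [mul_zero, exp_zero]
  nlinarith [neg_abs_le x, sq_nonneg (s * x)]

end Real

namespace MeasureTheory

lemma Integrable.pow_of_abs_pow_of_le {α : Type*} [MeasurableSpace α] {μ : Measure α}
    [IsFiniteMeasure μ] {f : α → ℝ} (hf : AEStronglyMeasurable f μ) {k n : ℕ} (hkn : k ≤ n)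
    (hint : Integrable (fun x => |f x| ^ n) μ) : Integrable (fun x => f x ^ k) μ :=
  (integrable_norm_pow_of_le hf hkn (by simpa using hint)).mono' (hf.pow k)
    (ae_of_all _ fun x => by rw [norm_pow])

end MeasureTheory

theorem stmt1 {Ω : Type*} [MeasureSpace Ω] [IsProbabilityMeasure (ℙ : Measure Ω)]
    (X : Ω → ℝ) (ρ h s : ℝ) (hmeas : Measurable X) (hh : 0 < h) (hs : 0 ≤ s)
    (hint3 : Integrable (fun ω => |X ω| ^ 3) ℙ)
    (h1 : ∫ ω, X ω ∂ℙ = 0) (h2 : ∫ ω, (X ω) ^ 2 ∂ℙ = 1)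
    (h3 : ∫ ω, |X ω| ^ 3 ∂ℙ = ρ)
    (Y : Ω → ℝ) (hY : ∀ ω, Y ω = if |X ω| ≤ h then X ω else 0) :
    ∫ ω, Real.exp (s * Y ω) ∂ℙ ≤ 1 + s ^ 2 / 2 + ρ / h ^ 3 * (Real.exp (s * h) - 1) := by
  have hX : Integrable X ℙ := by
    simpa using hint3.pow_of_abs_pow_of_le hmeas.aestronglyMeasurable (k := 1) (by norm_num)
  have hX2 : Integrable (fun ω => X ω ^ 2) ℙ :=
    hint3.pow_of_abs_pow_of_le hmeas.aestronglyMeasurable (by norm_num)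
  have hbound : Integrable (fun ω => 1 + s * X ω + s ^ 2 / 2 * X ω ^ 2
      + (exp (s * h) - 1) / h ^ 3 * |X ω| ^ 3) ℙ := by
    fun_prop
  calc ∫ ω, exp (s * Y ω) ∂ℙ
      ≤ ∫ ω, (1 + s * X ω + s ^ 2 / 2 * X ω ^ 2 + (exp (s * h) - 1) / h ^ 3 * |X ω| ^ 3) ∂ℙ :=
        integral_mono_of_nonneg (ae_of_all _ fun ω => (exp_pos _).le) hbound
          (ae_of_all _ fun ω => by simpa only [hY] using exp_mul_truncation_le hh hs (X ω))
    _ = 1 + s ^ 2 / 2 + ρ / h ^ 3 * (exp (s * h) - 1) := by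
      rw [integral_add (by fun_prop) (by fun_prop), integral_add (by fun_prop) (by fun_prop),
        integral_add (by fun_prop) (by fun_prop)]
      simp [integral_const_mul, h1, h2, h3]
      ring
end

section
/- Let X be a random variable with E[X]=0, E[X^2]=1, E[|X|^3]=ρ<∞, and Y = X·1_{|X|≤h} for h>0. Then for any s ≥ 0, E[Y·exp(sY)] ≤ s + (ρ/h²)·exp(sh). -/
open MeasureTheory ProbabilityTheory Real

private lemma exp_sub_eq_tsum (t : ℝ) :
    Real.exp t - 1 - t = ∑' n : ℕ, t ^ (n + 2) / (n + 2).factorial := by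
  have hsum : Summable (fun n : ℕ => t ^ n / n.factorial) :=
    Real.summable_pow_div_factorial t
  have hsplit := Summable.sum_add_tsum_nat_add 2 hsum
  have hexp : Real.exp t = ∑' n : ℕ, t ^ n / n.factorial := by
    rw [Real.exp_eq_exp_ℝ, NormedSpace.exp_eq_tsum_div]
  rw [hexp, ← hsplit]
  simp [Finset.sum_range_succ]
  ring

private lemma summable_shift (t : ℝ) :
    Summable (fun n : ℕ => t ^ (n + 2) / (n + 2).factorial) :=
  (summable_nat_add_iff (f := fun n : ℕ => t ^ n / n.factorial) 2).mpr
    (Real.summable_pow_div_factorial t)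

private lemma exp_quad_mono {t u : ℝ} (ht : 0 ≤ t) (htu : t ≤ u) :
    u ^ 2 * (Real.exp t - 1 - t) ≤ t ^ 2 * (Real.exp u - 1 - u) := by
  rw [exp_sub_eq_tsum, exp_sub_eq_tsum, ← tsum_mul_left, ← tsum_mul_left]
  refine Summable.tsum_le_tsum (fun n => ?_) ((summable_shift t).mul_left _)
    ((summable_shift u).mul_left _)
  have hfac : (0:ℝ) < (n + 2).factorial := by positivity
  rw [mul_div_assoc', mul_div_assoc', div_le_div_iff₀ hfac hfac]
  have hpow : t ^ n ≤ u ^ n := pow_le_pow_left₀ ht htu n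
  calc u ^ 2 * t ^ (n + 2) * (n + 2).factorial
      = (t ^ 2 * u ^ 2 * (n + 2).factorial) * t ^ n := by ring
    _ ≤ (t ^ 2 * u ^ 2 * (n + 2).factorial) * u ^ n := by
        apply mul_le_mul_of_nonneg_left hpow; positivity
    _ = t ^ 2 * u ^ (n + 2) * (n + 2).factorial := by ring

private lemma key1 {h s y : ℝ} (hh : 0 < h) (hs : 0 ≤ s) (hy : |y| ≤ h) :
    y * Real.exp (s * y) ≤ y + s * y ^ 2 + Real.exp (s * h) / h ^ 2 * |y| ^ 3 := by
  have hterm : 0 ≤ Real.exp (s * h) / h ^ 2 * |y| ^ 3 := by positivity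
  rcases le_or_gt y 0 with hy0 | hy0
  · have ha : s * y + 1 ≤ Real.exp (s * y) := Real.add_one_le_exp _
    have hb : y * Real.exp (s * y) ≤ y * (s * y + 1) :=
      mul_le_mul_of_nonpos_left ha hy0
    nlinarith
  · rcases eq_or_lt_of_le hs with hs0 | hs0
    · subst hs0
      simp only [zero_mul, Real.exp_zero, mul_one]
      have : (0:ℝ) ≤ 1 / h ^ 2 * |y| ^ 3 := by positivity
      nlinarith
    · have hyh : y ≤ h := (le_abs_self y).trans hy
      have hmono := exp_quad_mono (t := s * y) (u := s * h)
        (by positivity) (by nlinarith)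
      have hF : Real.exp (s * h) - 1 - s * h ≤ Real.exp (s * h) := by
        nlinarith [mul_pos hs0 hh]
      have hE : h ^ 2 * (Real.exp (s * y) - 1 - s * y)
          ≤ y ^ 2 * Real.exp (s * h) := by
        have hm2 := mul_le_mul_of_nonneg_left hF
          (by positivity : (0:ℝ) ≤ (s * y) ^ 2)
        have hchain : (s * h) ^ 2 * (Real.exp (s * y) - 1 - s * y)
            ≤ (s * y) ^ 2 * Real.exp (s * h) := hmono.trans hm2
        nlinarith [hchain, mul_pos hs0 hs0]
      have hyE : y * (Real.exp (s * y) - 1 - s * y)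
          ≤ Real.exp (s * h) / h ^ 2 * y ^ 3 := by
        rw [div_mul_eq_mul_div, le_div_iff₀ (by positivity : (0:ℝ) < h ^ 2)]
        calc y * (Real.exp (s * y) - 1 - s * y) * h ^ 2
            = y * (h ^ 2 * (Real.exp (s * y) - 1 - s * y)) := by ring
          _ ≤ y * (y ^ 2 * Real.exp (s * h)) :=
              mul_le_mul_of_nonneg_left hE hy0.le
          _ = Real.exp (s * h) * y ^ 3 * 1 := by ring
          _ = Real.exp (s * h) * y ^ 3 := by ring
      have habs : |y| ^ 3 = y ^ 3 := by rw [abs_of_pos hy0]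
      rw [habs]
      nlinarith [hyE]

private lemma key2 {h s x : ℝ} (hh : 0 < h) (hs : 0 ≤ s) (hx : ¬ |x| ≤ h) :
    0 ≤ x + s * x ^ 2 + Real.exp (s * h) / h ^ 2 * |x| ^ 3 := by
  push_neg at hx
  have hexp1 : 1 ≤ Real.exp (s * h) := Real.one_le_exp (by positivity)
  rcases le_or_gt 0 x with hx0 | hx0
  · have : 0 ≤ Real.exp (s * h) / h ^ 2 * |x| ^ 3 := by positivity
    nlinarith
  · have habs : |x| = -x := abs_of_neg hx0
    have hsq : h * h < |x| * |x| := by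
      apply mul_lt_mul'' hx hx hh.le hh.le
    have ha : |x| ≤ |x| ^ 3 / h ^ 2 := by
      rw [le_div_iff₀ (by positivity : (0:ℝ) < h ^ 2)]
      nlinarith [abs_nonneg x, hsq]
    have hb : |x| ^ 3 / h ^ 2 ≤ Real.exp (s * h) / h ^ 2 * |x| ^ 3 := by
      calc |x| ^ 3 / h ^ 2 = 1 * (|x| ^ 3 / h ^ 2) := by ring
        _ ≤ Real.exp (s * h) * (|x| ^ 3 / h ^ 2) :=
            mul_le_mul_of_nonneg_right hexp1 (by positivity)
        _ = Real.exp (s * h) / h ^ 2 * |x| ^ 3 := by ring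
    nlinarith [mul_nonneg hs (sq_nonneg x)]

theorem stmt2 {Ω : Type*} [MeasureSpace Ω] [IsProbabilityMeasure (ℙ : Measure Ω)]
    (X : Ω → ℝ) (ρ h s : ℝ) (hmeas : Measurable X) (hh : 0 < h) (hs : 0 ≤ s)
    (hint3 : Integrable (fun ω => |X ω| ^ 3) ℙ)
    (h1 : ∫ ω, X ω ∂ℙ = 0) (h2 : ∫ ω, (X ω) ^ 2 ∂ℙ = 1)
    (h3 : ∫ ω, |X ω| ^ 3 ∂ℙ = ρ)
    (Y : Ω → ℝ) (hY : ∀ ω, Y ω = if |X ω| ≤ h then X ω else 0) :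
    ∫ ω, Y ω * Real.exp (s * Y ω) ∂ℙ ≤ s + ρ / h ^ 2 * Real.exp (s * h) := by
  set c : ℝ := Real.exp (s * h) / h ^ 2 with hc
  have hXmeas : AEStronglyMeasurable X ℙ := hmeas.aestronglyMeasurable
  have hintX : Integrable X ℙ := by
    refine ((integrable_const (1:ℝ)).add hint3).mono' hXmeas ?_
    filter_upwards with ω
    simp only [Real.norm_eq_abs, Pi.add_apply]
    rcases le_or_gt (|X ω|) 1 with ha | ha
    · nlinarith [pow_nonneg (abs_nonneg (X ω)) 3]
    · nlinarith [abs_nonneg (X ω),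
        mul_nonneg (mul_nonneg (sub_nonneg.mpr ha.le) (abs_nonneg (X ω)))
          (abs_nonneg (X ω)),
        mul_le_mul ha.le ha.le (by norm_num) (abs_nonneg (X ω))]
  have hintX2 : Integrable (fun ω => X ω ^ 2) ℙ := by
    refine ((integrable_const (1:ℝ)).add hint3).mono'
      ((hmeas.pow_const 2).aestronglyMeasurable) ?_
    filter_upwards with ω
    simp only [Real.norm_eq_abs, Pi.add_apply]
    rw [abs_of_nonneg (sq_nonneg (X ω)), ← sq_abs (X ω)]
    rcases le_or_gt (|X ω|) 1 with ha | ha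
    · nlinarith [pow_nonneg (abs_nonneg (X ω)) 3, abs_nonneg (X ω)]
    · nlinarith [abs_nonneg (X ω),
        mul_nonneg (mul_nonneg (sub_nonneg.mpr ha.le) (abs_nonneg (X ω)))
          (abs_nonneg (X ω))]
  have hYmeas : Measurable Y := by
    have hYf : Y = fun ω => if |X ω| ≤ h then X ω else 0 := funext hY
    rw [hYf]
    exact Measurable.ite (measurableSet_le hmeas.abs measurable_const) hmeas
      measurable_const
  have hYb : ∀ ω, |Y ω| ≤ h := by
    intro ω
    rw [hY]
    split
    · assumption
    · simpa using hh.le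
  have hintL : Integrable (fun ω => Y ω * Real.exp (s * Y ω)) ℙ := by
    refine (integrable_const (h * Real.exp (s * h))).mono'
      ((hYmeas.mul ((measurable_const.mul hYmeas).exp)).aestronglyMeasurable) ?_
    filter_upwards with ω
    rw [Real.norm_eq_abs, abs_mul, Real.abs_exp]
    have he : Real.exp (s * Y ω) ≤ Real.exp (s * h) := by
      apply Real.exp_le_exp.mpr
      have := le_abs_self (Y ω)
      nlinarith [hYb ω]
    exact mul_le_mul (hYb ω) he (Real.exp_pos _).le hh.le
  have hA : Integrable (fun ω => X ω + s * X ω ^ 2) ℙ :=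
    hintX.add (hintX2.const_mul s)
  have hB : Integrable (fun ω => c * |X ω| ^ 3) ℙ := hint3.const_mul c
  have hintR : Integrable (fun ω => X ω + s * X ω ^ 2 + c * |X ω| ^ 3) ℙ :=
    hA.add hB
  have hpt : ∀ ω, Y ω * Real.exp (s * Y ω)
      ≤ X ω + s * X ω ^ 2 + c * |X ω| ^ 3 := by
    intro ω
    rw [hY, hc]
    split_ifs with hcase
    · exact key1 hh hs hcase
    · simpa using key2 hh hs hcase
  calc ∫ ω, Y ω * Real.exp (s * Y ω) ∂ℙ
      ≤ ∫ ω, (X ω + s * X ω ^ 2 + c * |X ω| ^ 3) ∂ℙ :=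
        integral_mono hintL hintR hpt
    _ = (∫ ω, X ω ∂ℙ) + s * (∫ ω, X ω ^ 2 ∂ℙ) + c * (∫ ω, |X ω| ^ 3 ∂ℙ) := by
        rw [integral_add hA hB, integral_add hintX (hintX2.const_mul s),
          integral_const_mul, integral_const_mul]
    _ = s + ρ / h ^ 2 * Real.exp (s * h) := by
        rw [h1, h2, h3, hc]
        ring
end

section
/- Let X be a random variable with E[X]=0, E[X^2]=1, E[|X|^3]=ρ<∞, and Y = X·1_{|X|≤h} for h>0. Then for any s ≥ 0, E[Y²·exp(sY)] ≤ 1 + (ρ/h)·exp(sh). -/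
open MeasureTheory ProbabilityTheory Real

theorem stmt3 {Ω : Type*} [MeasureSpace Ω] [IsProbabilityMeasure (ℙ : Measure Ω)]
    (X : Ω → ℝ) (ρ h s : ℝ) (hmeas : Measurable X) (hh : 0 < h) (hs : 0 ≤ s)
    (hint3 : Integrable (fun ω => |X ω| ^ 3) ℙ)
    (h1 : ∫ ω, X ω ∂ℙ = 0) (h2 : ∫ ω, (X ω) ^ 2 ∂ℙ = 1)
    (h3 : ∫ ω, |X ω| ^ 3 ∂ℙ = ρ)
    (Y : Ω → ℝ) (hY : ∀ ω, Y ω = if |X ω| ≤ h then X ω else 0) :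
    ∫ ω, (Y ω) ^ 2 * Real.exp (s * Y ω) ∂ℙ ≤ 1 + ρ / h * Real.exp (s * h) := by
  -- key pointwise inequality
  have key : ∀ y : ℝ, |y| ≤ h → y^2 * Real.exp (s*y) ≤ y^2 + |y|^3 * (Real.exp (s*h) / h) := by
    intro y hy
    rcases le_or_gt y 0 with hy0 | hy0
    · have h1 : Real.exp (s*y) ≤ 1 := by
        rw [Real.exp_le_one_iff]
        exact mul_nonpos_of_nonneg_of_nonpos hs hy0
      have h2 : |y|^3 * (Real.exp (s*h) / h) ≥ 0 := by positivity
      nlinarith [sq_nonneg y]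
    · have hyh : y ≤ h := le_trans (le_abs_self y) hy
      have hb : 0 ≤ y / h := by positivity
      have ha : 0 ≤ 1 - y / h := by
        have : y / h ≤ 1 := (div_le_one hh).2 hyh
        linarith
      have hab : (1 - y/h) + y/h = 1 := by ring
      have hconv := convexOn_exp.2 (Set.mem_univ (0:ℝ)) (Set.mem_univ (s*h)) ha hb hab
      simp only [smul_eq_mul, mul_zero, zero_add, Real.exp_zero, mul_one] at hconv
      have heq : y / h * (s * h) = s * y := by field_simp
      rw [heq] at hconv
      have hexp : Real.exp (s*y) ≤ 1 + y/h * Real.exp (s*h) := by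
        have : y/h ≤ 1 := (div_le_one hh).2 hyh
        nlinarith [Real.exp_pos (s*h)]
      have hy3 : |y|^3 = y^3 := by rw [abs_of_pos hy0]
      rw [hy3]
      have := mul_le_mul_of_nonneg_left hexp (sq_nonneg y)
      calc y^2 * Real.exp (s*y) ≤ y^2 * (1 + y/h * Real.exp (s*h)) := this
        _ = y^2 + y^3 * (Real.exp (s*h) / h) := by field_simp
  -- pointwise bound by X
  have ptw : ∀ ω, (Y ω)^2 * Real.exp (s * Y ω) ≤ X ω^2 + |X ω|^3 * (Real.exp (s*h) / h) := by
    intro ω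
    rw [hY ω]
    split_ifs with hc
    · exact key (X ω) hc
    · simp only [ne_eq, OfNat.ofNat_ne_zero, not_false_eq_true, zero_pow, mul_zero, zero_mul]
      positivity
  have hX2 : Integrable (fun ω => X ω ^ 2) ℙ := by
    refine ((integrable_const (1:ℝ)).add hint3).mono' ((hmeas.pow_const 2).aestronglyMeasurable) ?_
    filter_upwards with ω
    rw [Real.norm_eq_abs, abs_of_nonneg (sq_nonneg _)]; simp only [Pi.add_apply]
    have h0 : (0:ℝ) ≤ |X ω| := abs_nonneg _
    nlinarith [sq_abs (X ω), sq_nonneg (|X ω| - 1)]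
  have hRint : Integrable (fun ω => X ω^2 + |X ω|^3 * (Real.exp (s*h) / h)) ℙ :=
    hX2.add (hint3.mul_const _)
  calc ∫ ω, (Y ω) ^ 2 * Real.exp (s * Y ω) ∂ℙ
      ≤ ∫ ω, (X ω^2 + |X ω|^3 * (Real.exp (s*h) / h)) ∂ℙ := by
        refine integral_mono_of_nonneg ?_ hRint ?_
        · filter_upwards with ω; positivity
        · filter_upwards with ω; exact ptw ω
    _ = 1 + ρ / h * Real.exp (s * h) := by
        rw [integral_add hX2 (hint3.mul_const _), h2, integral_mul_const, h3]
        ring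
end
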